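/- arXiv:1806.09619 — 2 statements merged into one kernel-verified Lean document; each statement's English description precedes it below -/
import Mathlib

section
/- The uncoded decentralized coded caching rate R_u(M) = ((N-M)/M)·(1 - ((N-M)/N)^{min(N,K)}) is strictly decreasing in M on (0, N) for fixed N ≥ 1 and K ≥ 1. -/
/-!
With `u = (N - M) / N` one has `(N - M) / M = u / (1 - u)`, so the rate is
`u (1 - uⁿ) / (1 - u) = u + u² + ⋯ + uⁿ` with `n = min N K ≥ 1`. This polynomial is
strictly increasing for `u ≥ 0`, while `u` decreases strictly from `1` to `0` as `M` runs
over `(0, N)`.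
-/

open Finset

lemma div_one_sub_mul_one_sub_pow {F : Type*} [Field F] {u : F} (hu : u ≠ 1) (n : ℕ) :
    u / (1 - u) * (1 - u ^ n) = ∑ i ∈ range n, u ^ (i + 1) := by
  have h : 1 - u ≠ 0 := sub_ne_zero.mpr hu.symm
  simp_rw [pow_succ, ← sum_mul, ← mul_neg_geom_sum u n]
  field_simp

lemma strictMonoOn_sum_range_pow_succ {R : Type*} [Semiring R] [PartialOrder R]
    [IsStrictOrderedRing R] {n : ℕ} (hn : n ≠ 0) :
    StrictMonoOn (fun u : R => ∑ i ∈ range n, u ^ (i + 1)) (Set.Ici 0) := by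
  intro u hu v _ huv
  exact sum_lt_sum_of_nonempty (nonempty_range_iff.mpr hn) fun i _ =>
    pow_lt_pow_left₀ huv hu i.succ_ne_zero

/-- The uncoded decentralized rate R_u(M) = ((N-M)/M)(1-((N-M)/N)^{min(N,K)})
is strictly decreasing in M on (0,N), for fixed integers N ≥ 1, K ≥ 1. -/
theorem stmt7 (N K : ℕ) (hN : 1 ≤ N) (hK : 1 ≤ K) :
    StrictAntiOn
      (fun M : ℝ => ((N : ℝ) - M) / M * (1 - (((N : ℝ) - M) / N) ^ (min N K)))
      (Set.Ioo 0 (N : ℝ)) := by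
  set u : ℝ → ℝ := fun M => ((N : ℝ) - M) / N
  have hNpos : (0 : ℝ) < N := by exact_mod_cast hN
  have hu_anti : StrictAntiOn u (Set.Ioo 0 N) := fun a _ b _ hab =>
    div_lt_div_of_pos_right (by linarith) hNpos
  have hu_maps : Set.MapsTo u (Set.Ioo 0 N) (Set.Ici 0) := fun M hM =>
    div_nonneg (sub_nonneg.mpr hM.2.le) hNpos.le
  have hrate : Set.EqOn (fun M => ∑ i ∈ range (min N K), u M ^ (i + 1))
      (fun M : ℝ => ((N : ℝ) - M) / M * (1 - (((N : ℝ) - M) / N) ^ (min N K)))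
      (Set.Ioo 0 N) := by
    intro M hM
    have hu1 : u M ≠ 1 := ((div_lt_one hNpos).mpr (by linarith [hM.1])).ne
    have hratio : u M / (1 - u M) = ((N : ℝ) - M) / M := by
      simp only [u]
      field_simp [hM.1.ne']
      ring
    simp only [← div_one_sub_mul_one_sub_pow hu1, hratio, u]
  exact ((strictMonoOn_sum_range_pow_succ (by omega)).comp_strictAntiOn hu_anti hu_maps).congr
    hrate
end

section
/- For uncoded prefetching (r = 1, so q = M/N), the general rate formula R_dec reduces to the uncoded decentralized rate: if s = 1 (i.e., A(2) < 1 ≤ A(1)) and the full last iteration is needed, R_dec with r=1 equals Σ_{j=1}^{K} q^{j-1}(1-q)^{K-j+1}(C(K,j) - C(K-J,j)), which equals ((1-q)/q)·(1 - (1-q)^{J}) where J = min(N,K). -/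
/-!
Put `x = q` and `y = 1 - q`. For `n ≤ K`, the shifted binomial sum
`x * ∑_{j ≥ 1} x^(j-1) y^(K-j+1) C(n,j)` equals `y^(K-n+1) ((x+y)^n - y^n)`, which is
`(1-q)^(K-n+1) (1 - (1-q)^n)` since `x + y = 1`. Applying this with `n = K` and `n = K - J`
and subtracting, the `(1-q)^K` terms cancel and `(1-q)(1 - (1-q)^J)` remains.
-/

open Finset

theorem sum_Icc_one_pow_mul_pow_mul_choose {R : Type*} [CommRing R] (x y : R) (n : ℕ) :
    ∑ j ∈ Icc 1 n, x ^ j * y ^ (n - j) * n.choose j = (x + y) ^ n - y ^ n := by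
  rw [add_pow, Nat.range_succ_eq_Icc_zero, ← insert_Icc_add_one_left_eq_Icc n.zero_le,
    sum_insert (by simp)]
  simp

theorem mul_sum_Icc_one_pow_mul_pow_mul_choose {R : Type*} [CommRing R] (x y : R)
    {n K : ℕ} (hn : n ≤ K) :
    x * ∑ j ∈ Icc 1 K, x ^ (j - 1) * y ^ (K - j + 1) * n.choose j
      = y ^ (K - n + 1) * ((x + y) ^ n - y ^ n) := by
  have htail : ∑ j ∈ Icc 1 K, x ^ (j - 1) * y ^ (K - j + 1) * n.choose j
      = ∑ j ∈ Icc 1 n, x ^ (j - 1) * y ^ (K - j + 1) * n.choose j := by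
    refine (sum_subset (Icc_subset_Icc_right hn) fun j hjK hjn => ?_).symm
    rw [Nat.choose_eq_zero_of_lt (by simp_all), Nat.cast_zero, mul_zero]
  rw [htail, ← sum_Icc_one_pow_mul_pow_mul_choose, mul_sum, mul_sum]
  refine sum_congr rfl fun j hj => ?_
  obtain ⟨hj1, hjn⟩ := mem_Icc.mp hj
  have hx : x ^ j = x * x ^ (j - 1) := by rw [← pow_succ', Nat.sub_add_cancel hj1]
  have hy : y ^ (K - j + 1) = y ^ (K - n + 1) * y ^ (n - j) := by rw [← pow_add]; congr 1; omega
  rw [hx, hy]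
  ring

theorem stmt11_general (q : ℝ) (hq0 : 0 < q) (K J : ℕ)
    (hJK : J ≤ K) :
    ∑ j ∈ Finset.Icc 1 K,
      q ^ (j - 1) * (1 - q) ^ (K - j + 1) *
        ((Nat.choose K j : ℝ) - (Nat.choose (K - J) j : ℝ))
      = (1 - q) / q * (1 - (1 - q) ^ J) := by
  obtain ⟨m, rfl⟩ := Nat.exists_eq_add_of_le hJK
  have hfull := mul_sum_Icc_one_pow_mul_pow_mul_choose q (1 - q) (le_refl (J + m))
  have htrunc := mul_sum_Icc_one_pow_mul_pow_mul_choose q (1 - q) (Nat.le_add_left m J)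
  simp only [add_sub_cancel, one_pow, Nat.sub_self, zero_add, Nat.add_sub_cancel] at hfull htrunc
  rw [div_mul_eq_mul_div, eq_div_iff hq0.ne', mul_comm]
  simp only [mul_sub, sum_sub_distrib, Nat.add_sub_cancel_left]
  rw [hfull, htrunc]
  ring

/-- For q ∈ (0,1) and integers K ≥ J ≥ 1:
Σ_{j=1}^{K} q^{j-1}(1-q)^{K-j+1}(C(K,j) - C(K-J,j)) = ((1-q)/q)(1-(1-q)^J),
recovering the uncoded decentralized rate from the general formula at r = 1. -/
theorem stmt11 (q : ℝ) (hq0 : 0 < q) (hq1 : q < 1) (K J : ℕ)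
    (hJ : 1 ≤ J) (hJK : J ≤ K) :
    ∑ j ∈ Finset.Icc 1 K,
      q ^ (j - 1) * (1 - q) ^ (K - j + 1) *
        ((Nat.choose K j : ℝ) - (Nat.choose (K - J) j : ℝ))
      = (1 - q) / q * (1 - (1 - q) ^ J) :=
  stmt11_general q hq0 K J hJK
end
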